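/- Exact variational characterization of the SIM for the linear model: let γ > 0 and let z be the solution of the linear model with constants c₁, c₂. Then for all t ∈ ℝ, ‖∂_t z(t)‖₂² − ‖z(t)‖₂² = 2γ(γ+2)·c₂²·e^{−2(1+γ)t} ≥ 0. Consequently, for any t₀ < t_f and β ∈ ℝ, among all solutions with z₂(t_f) = β the functional ∫_{t₀}^{t_f} (‖∂_t z(t)‖₂² − ‖z(t)‖₂²) dt is uniquely minimized by the solution with c₂ = 0, which lies on the SIM and satisfies z₁(t_f) = β. -/
import Mathlib


open Real

/-- The functional ∫_{t₀}^{t_f} (‖∂_t z(t)‖₂² − ‖z(t)‖₂²) dt evaluated on the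
general solution of the linear model with constants c₁, c₂. -/
noncomputable def linFunctional (γ t₀ tf c₁ c₂ : ℝ) : ℝ :=
  ∫ t in t₀..tf,
    ((deriv (fun s => c₁ * Real.exp (-s) + c₂ * Real.exp ((-1 - γ) * s)) t) ^ 2
      + (deriv (fun s => c₁ * Real.exp (-s) - c₂ * Real.exp ((-1 - γ) * s)) t) ^ 2
      - ((c₁ * Real.exp (-t) + c₂ * Real.exp ((-1 - γ) * t)) ^ 2
          + (c₁ * Real.exp (-t) - c₂ * Real.exp ((-1 - γ) * t)) ^ 2))

lemma hd_plus (γ c₁ c₂ t : ℝ) :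
    HasDerivAt (fun s => c₁ * Real.exp (-s) + c₂ * Real.exp ((-1 - γ) * s))
      (c₁ * (-Real.exp (-t)) + c₂ * ((-1 - γ) * Real.exp ((-1 - γ) * t))) t := by
  have h1 : HasDerivAt (fun s : ℝ => Real.exp (-s)) (-Real.exp (-t)) t := by
    simpa using ((hasDerivAt_id t).neg.exp)
  have h2 : HasDerivAt (fun s : ℝ => Real.exp ((-1 - γ) * s))
      ((-1 - γ) * Real.exp ((-1 - γ) * t)) t := by
    simpa [mul_comm] using (((hasDerivAt_id t).const_mul (-1 - γ)).exp)
  exact (h1.const_mul c₁).add (h2.const_mul c₂)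

lemma hd_minus (γ c₁ c₂ t : ℝ) :
    HasDerivAt (fun s => c₁ * Real.exp (-s) - c₂ * Real.exp ((-1 - γ) * s))
      (c₁ * (-Real.exp (-t)) - c₂ * ((-1 - γ) * Real.exp ((-1 - γ) * t))) t := by
  have h1 : HasDerivAt (fun s : ℝ => Real.exp (-s)) (-Real.exp (-t)) t := by
    simpa using ((hasDerivAt_id t).neg.exp)
  have h2 : HasDerivAt (fun s : ℝ => Real.exp ((-1 - γ) * s))
      ((-1 - γ) * Real.exp ((-1 - γ) * t)) t := by
    simpa [mul_comm] using (((hasDerivAt_id t).const_mul (-1 - γ)).exp)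
  exact (h1.const_mul c₁).sub (h2.const_mul c₂)

lemma pointwise (γ c₁ c₂ t : ℝ) :
    (deriv (fun s => c₁ * Real.exp (-s) + c₂ * Real.exp ((-1 - γ) * s)) t) ^ 2
      + (deriv (fun s => c₁ * Real.exp (-s) - c₂ * Real.exp ((-1 - γ) * s)) t) ^ 2
      - ((c₁ * Real.exp (-t) + c₂ * Real.exp ((-1 - γ) * t)) ^ 2
          + (c₁ * Real.exp (-t) - c₂ * Real.exp ((-1 - γ) * t)) ^ 2)
      = 2 * γ * (γ + 2) * c₂ ^ 2 * Real.exp (-2 * (1 + γ) * t) := by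
  rw [(hd_plus γ c₁ c₂ t).deriv, (hd_minus γ c₁ c₂ t).deriv,
    show (-2 : ℝ) * (1 + γ) * t = (-1 - γ) * t + (-1 - γ) * t by ring, Real.exp_add]
  ring

lemma linFunctional_eq (γ t₀ tf c₁ c₂ : ℝ) :
    linFunctional γ t₀ tf c₁ c₂
      = 2 * γ * (γ + 2) * c₂ ^ 2 * ∫ t in t₀..tf, Real.exp (-2 * (1 + γ) * t) := by
  unfold linFunctional
  rw [← intervalIntegral.integral_const_mul]
  exact intervalIntegral.integral_congr fun t _ => pointwise γ c₁ c₂ t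

theorem stmt10 (γ : ℝ) (hγ : 0 < γ) :
    (∀ c₁ c₂ t : ℝ,
      (deriv (fun s => c₁ * exp (-s) + c₂ * exp ((-1 - γ) * s)) t) ^ 2
        + (deriv (fun s => c₁ * exp (-s) - c₂ * exp ((-1 - γ) * s)) t) ^ 2
        - ((c₁ * exp (-t) + c₂ * exp ((-1 - γ) * t)) ^ 2
            + (c₁ * exp (-t) - c₂ * exp ((-1 - γ) * t)) ^ 2)
        = 2 * γ * (γ + 2) * c₂ ^ 2 * exp (-2 * (1 + γ) * t) ∧
      0 ≤ 2 * γ * (γ + 2) * c₂ ^ 2 * exp (-2 * (1 + γ) * t)) ∧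
    (∀ t₀ tf β : ℝ, t₀ < tf →
      (∀ c₁ c₂ : ℝ, c₁ * exp (-tf) - c₂ * exp ((-1 - γ) * tf) = β →
        linFunctional γ t₀ tf (β * exp tf) 0 ≤ linFunctional γ t₀ tf c₁ c₂ ∧
        (linFunctional γ t₀ tf c₁ c₂ = linFunctional γ t₀ tf (β * exp tf) 0 ↔
          c₂ = 0)) ∧
      (∀ t : ℝ,
        β * exp tf * exp (-t) + 0 * exp ((-1 - γ) * t)
          = β * exp tf * exp (-t) - 0 * exp ((-1 - γ) * t)) ∧
      β * exp tf * exp (-tf) + 0 * exp ((-1 - γ) * tf) = β) := by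
  constructor
  · intro c₁ c₂ t
    refine ⟨pointwise γ c₁ c₂ t, ?_⟩
    positivity
  · intro t₀ tf β hlt
    have hI : 0 < ∫ t in t₀..tf, Real.exp (-2 * (1 + γ) * t) := by
      apply intervalIntegral.intervalIntegral_pos_of_pos
      · exact (Real.continuous_exp.comp (by continuity)).intervalIntegrable t₀ tf
      · intro x; positivity
      · exact hlt
    refine ⟨fun c₁ c₂ _ => ?_, fun t => by ring, ?_⟩
    · rw [linFunctional_eq, linFunctional_eq]
      have hK : (0:ℝ) < 2 * γ * (γ + 2) := by nlinarith
      constructor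
      · have h0 : 2 * γ * (γ + 2) * (0:ℝ) ^ 2 * ∫ t in t₀..tf, Real.exp (-2 * (1 + γ) * t) = 0 := by
          ring
        rw [h0]
        positivity
      · constructor
        · intro h
          have : 2 * γ * (γ + 2) * c₂ ^ 2 * ∫ t in t₀..tf, Real.exp (-2 * (1 + γ) * t) = 0 := by
            rw [h]; ring
          have hc2 : c₂ ^ 2 = 0 := by
            rcases mul_eq_zero.1 this with h' | h'
            · rcases mul_eq_zero.1 h' with h'' | h''
              · exact absurd h'' hK.ne'
              · exact h''
            · exact absurd h' hI.ne'
          exact pow_eq_zero_iff two_ne_zero |>.1 hc2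
        · intro h; rw [h]
    · rw [Real.exp_neg, zero_mul, add_zero, mul_assoc, mul_inv_cancel₀ (Real.exp_pos tf).ne', mul_one]
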